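/- Let 𝔤 be a (left) Leibniz algebra over a field of characteristic zero, let 𝔤^ann denote the linear span of all brackets [x,y], and let ι : 𝔤^ann ↪ 𝔤 be the inclusion. Define μ₂(a,b) := ½([a,b] − [b,a]) for a,b ∈ 𝔤 (which restricts to a map 𝔤 × 𝔤^ann → 𝔤^ann), and μ₃(x₁,x₂,x₃) := (1/12) Σ_{σ∈S₃} sgn(σ)·([[x_{σ(1)},x_{σ(2)}],x_{σ(3)}] + [x_{σ(3)},[x_{σ(1)},x_{σ(2)}]]) ∈ 𝔤^ann. Then (𝔤^ann, 𝔤, ι, μ₂, μ₃) is a 2-term L∞-algebra. -/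

import Mathlib

/-- A 2-term E₂L∞-algebra structure on a pair of vector spaces `Em1` (degree −1)
and `E0` (degree 0), with differential `e1`, binary products `e2` (on `E0 × E0`),
`e2r : E0 × Em1 → Em1`, `e2l : Em1 × E0 → Em1`, ternary product `e3` and
alternator `alt`. -/
structure Is2TermE2LInfty (K : Type*) [Field K] [CharZero K]
    {Em1 E0 : Type*} [AddCommGroup Em1] [Module K Em1] [AddCommGroup E0] [Module K E0]
    (e1 : Em1 → E0) (e2 : E0 → E0 → E0) (e2r : E0 → Em1 → Em1) (e2l : Em1 → E0 → Em1)
    (e3 : E0 → E0 → E0 → Em1) (alt : E0 → E0 → Em1) : Prop where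
  lin_e1 : IsLinearMap K e1
  lin_e2_left : ∀ y, IsLinearMap K fun x => e2 x y
  lin_e2_right : ∀ x, IsLinearMap K (e2 x)
  lin_e2r_left : ∀ y, IsLinearMap K fun x => e2r x y
  lin_e2r_right : ∀ x, IsLinearMap K (e2r x)
  lin_e2l_left : ∀ y, IsLinearMap K fun x => e2l x y
  lin_e2l_right : ∀ x, IsLinearMap K (e2l x)
  lin_e3_1 : ∀ y z, IsLinearMap K fun x => e3 x y z
  lin_e3_2 : ∀ x z, IsLinearMap K fun y => e3 x y z
  lin_e3_3 : ∀ x y, IsLinearMap K (e3 x y)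
  lin_alt_left : ∀ y, IsLinearMap K fun x => alt x y
  lin_alt_right : ∀ x, IsLinearMap K (alt x)
  /-- (E1) `ε₂` is a chain map. -/
  E1a : ∀ x y, e1 (e2r x y) = e2 x (e1 y)
  E1b : ∀ x y, e1 (e2l y x) = e2 (e1 y) x
  E1c : ∀ y₁ y₂, e2r (e1 y₁) y₂ = e2l y₁ (e1 y₂)
  /-- (E2) `alt` is a chain homotopy from `ε₂ + ε₂ ∘ σ₁₂` to `0`. -/
  E2a : ∀ x₁ x₂, e2 x₁ x₂ + e2 x₂ x₁ = e1 (alt x₁ x₂)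
  E2b : ∀ x y, e2r x y + e2l y x = alt x (e1 y)
  /-- (E3) `ε₃` is a chain homotopy from the Jacobiator expression to `0`. -/
  E3a : ∀ x₁ x₂ x₃,
    e2 x₁ (e2 x₂ x₃) - e2 (e2 x₁ x₂) x₃ - e2 x₂ (e2 x₁ x₃) = - e1 (e3 x₁ x₂ x₃)
  E3b : ∀ x₁ x₂ y,
    e2r x₁ (e2r x₂ y) - e2r (e2 x₁ x₂) y - e2r x₂ (e2r x₁ y) = - e3 x₁ x₂ (e1 y)
  E3c : ∀ x₁ y x₃,
    e2r x₁ (e2l y x₃) - e2l (e2r x₁ y) x₃ - e2l y (e2 x₁ x₃) = - e3 x₁ (e1 y) x₃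
  E3d : ∀ y x₂ x₃,
    e2l y (e2 x₂ x₃) - e2l (e2l y x₂) x₃ - e2r x₂ (e2l y x₃) = - e3 (e1 y) x₂ x₃
  /-- (E4) -/
  E4 : ∀ x₁ x₂, alt x₁ x₂ = alt x₂ x₁
  /-- (E5) -/
  E5 : ∀ x₁ x₂ x₃, e3 x₁ x₂ x₃ + e3 x₂ x₁ x₃ = e2l (alt x₁ x₂) x₃
  /-- (E6) -/
  E6 : ∀ x₁ x₂ x₃, e3 x₁ x₂ x₃ + e3 x₁ x₃ x₂ =
    alt (e2 x₁ x₂) x₃ + alt x₂ (e2 x₁ x₃) - e2r x₁ (alt x₂ x₃)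
  /-- (E7) -/
  E7 : ∀ x₁ x₂ x₃ x₄,
    e2r x₁ (e3 x₂ x₃ x₄) + e3 x₁ (e2 x₂ x₃) x₄ + e3 x₁ x₃ (e2 x₂ x₄)
      + e2l (e3 x₁ x₂ x₃) x₄ + e2r x₃ (e3 x₁ x₂ x₄)
    = e3 x₁ x₂ (e2 x₃ x₄) + e3 (e2 x₁ x₂) x₃ x₄ + e2r x₂ (e3 x₁ x₃ x₄)
      + e3 x₂ (e2 x₁ x₃) x₄ + e3 x₂ x₃ (e2 x₁ x₄)

/-- A 2-term L∞-algebra structure on vector spaces `Lm1` (degree −1) and `L0`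
(degree 0), with differential `m1`, antisymmetric binary product `m2` (on `L0 × L0`),
mixed product `m2r : L0 × Lm1 → Lm1` (with the convention `μ₂(y,x) = −μ₂(x,y)` for
`x : L0`, `y : Lm1`) and totally antisymmetric ternary product `m3`. -/
structure Is2TermLInfty (K : Type*) [Field K] [CharZero K]
    {Lm1 L0 : Type*} [AddCommGroup Lm1] [Module K Lm1] [AddCommGroup L0] [Module K L0]
    (m1 : Lm1 → L0) (m2 : L0 → L0 → L0) (m2r : L0 → Lm1 → Lm1)
    (m3 : L0 → L0 → L0 → Lm1) : Prop where
  lin_m1 : IsLinearMap K m1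
  lin_m2_left : ∀ y, IsLinearMap K fun x => m2 x y
  lin_m2_right : ∀ x, IsLinearMap K (m2 x)
  lin_m2r_left : ∀ y, IsLinearMap K fun x => m2r x y
  lin_m2r_right : ∀ x, IsLinearMap K (m2r x)
  lin_m3_1 : ∀ y z, IsLinearMap K fun x => m3 x y z
  lin_m3_2 : ∀ x z, IsLinearMap K fun y => m3 x y z
  lin_m3_3 : ∀ x y, IsLinearMap K (m3 x y)
  m2_antisym : ∀ x₁ x₂, m2 x₁ x₂ = - m2 x₂ x₁
  m3_antisym12 : ∀ x₁ x₂ x₃, m3 x₁ x₂ x₃ = - m3 x₂ x₁ x₃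
  m3_antisym23 : ∀ x₁ x₂ x₃, m3 x₁ x₂ x₃ = - m3 x₁ x₃ x₂
  /-- (L1) -/
  L1 : ∀ x y, m1 (m2r x y) = m2 x (m1 y)
  /-- (L2) -/
  L2 : ∀ y₁ y₂, m2r (m1 y₁) y₂ + m2r (m1 y₂) y₁ = 0
  /-- (L3) -/
  L3 : ∀ x₁ x₂ x₃,
    m2 x₁ (m2 x₂ x₃) + m2 x₂ (m2 x₃ x₁) + m2 x₃ (m2 x₁ x₂) = - m1 (m3 x₁ x₂ x₃)
  /-- (L4), written using `μ₂(y,x₁) = −m2r x₁ y` and `μ₂(y, μ₂(x₁,x₂)) = −m2r (m2 x₁ x₂) y`. -/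
  L4 : ∀ x₁ x₂ y,
    m2r x₁ (m2r x₂ y) - m2r x₂ (m2r x₁ y) - m2r (m2 x₁ x₂) y = - m3 x₁ x₂ (m1 y)
  /-- (L5), written using `μ₂(μ₃(·,·,·), x) = −m2r x (m3 · · ·)`. -/
  L5 : ∀ x₁ x₂ x₃ x₄,
    m3 (m2 x₁ x₂) x₃ x₄ - m3 (m2 x₁ x₃) x₂ x₄ + m3 (m2 x₁ x₄) x₂ x₃
      + m3 (m2 x₂ x₃) x₁ x₄ - m3 (m2 x₂ x₄) x₁ x₃ + m3 (m2 x₃ x₄) x₁ x₂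
    = - m2r x₄ (m3 x₁ x₂ x₃) + m2r x₃ (m3 x₁ x₂ x₄)
      - m2r x₂ (m3 x₁ x₃ x₄) + m2r x₁ (m3 x₂ x₃ x₄)


/-- The subspace `𝔤^ann = [𝔤,𝔤]`: the linear span of all brackets. -/
def leibAnn (K : Type*) [Field K] {V : Type*} [AddCommGroup V] [Module K V]
    (br : V →ₗ[K] V →ₗ[K] V) : Submodule K V :=
  Submodule.span K (Set.range fun p : V × V => br p.1 p.2)

lemma br_mem_leibAnn_right (K : Type*) [Field K] {V : Type*} [AddCommGroup V]
    [Module K V] (br : V →ₗ[K] V →ₗ[K] V) (x y : V) : br x y ∈ leibAnn K br :=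
  Submodule.subset_span ⟨(x, y), rfl⟩

lemma br_mem_leibAnn_left (K : Type*) [Field K] {V : Type*} [AddCommGroup V]
    [Module K V] (br : V →ₗ[K] V →ₗ[K] V)
    (hbr : ∀ x y z : V, br x (br y z) = br (br x y) z + br y (br x z))
    (x : V) {y : V} (hy : y ∈ leibAnn K br) : br x y ∈ leibAnn K br := by
  have h : Submodule.span K (Set.range fun p : V × V => br p.1 p.2) ≤
      (leibAnn K br).comap (br x) := by
    apply Submodule.span_le.mpr
    rintro _ ⟨⟨a, b⟩, rfl⟩
    simp only [SetLike.mem_coe, Submodule.mem_comap]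
    rw [hbr x a b]
    exact add_mem (br_mem_leibAnn_right K br _ _) (br_mem_leibAnn_right K br _ _)
  exact h hy

/-- The ternary product
`μ₃(x₁,x₂,x₃) = (1/12) Σ_{σ∈S₃} sgn(σ)·([[x_{σ(1)},x_{σ(2)}],x_{σ(3)}] +
[x_{σ(3)},[x_{σ(1)},x_{σ(2)}]])`. -/
noncomputable def leibMu3 (K : Type*) [Field K] {V : Type*} [AddCommGroup V]
    [Module K V] (br : V →ₗ[K] V →ₗ[K] V) (x₁ x₂ x₃ : V) : V :=
  (12 : K)⁻¹ • ∑ σ : Equiv.Perm (Fin 3),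
    ((Equiv.Perm.sign σ : ℤ)) •
      (br (br (![x₁, x₂, x₃] (σ 0)) (![x₁, x₂, x₃] (σ 1))) (![x₁, x₂, x₃] (σ 2))
        + br (![x₁, x₂, x₃] (σ 2)) (br (![x₁, x₂, x₃] (σ 0)) (![x₁, x₂, x₃] (σ 1))))

lemma leibMu3_mem (K : Type*) [Field K] {V : Type*} [AddCommGroup V] [Module K V]
    (br : V →ₗ[K] V →ₗ[K] V) (x₁ x₂ x₃ : V) : leibMu3 K br x₁ x₂ x₃ ∈ leibAnn K br := by
  apply Submodule.smul_mem
  apply Submodule.sum_mem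
  intro σ _
  exact zsmul_mem
    (add_mem (br_mem_leibAnn_right K br _ _) (br_mem_leibAnn_right K br _ _)) _

/-!
The Leibniz rule, read as `[[x,y],z] = [x,[y,z]] - [y,[x,z]]`, rewrites every bracket monomial
as a combination of right-normed ones `[a,[b,c]]`, `[a,[b,[c,d]]]`. In particular `μ₃` becomes
`¼ Σ_σ sgn σ [x_σ1,[x_σ2,x_σ3]]`. Linearity, the antisymmetries, (L1) and (L2) are formal, and
(L4) is (L3) with its last argument in `𝔤^ann`. After the rewriting, (L3) and (L5) are identities
between right-normed monomials of degree 3 and 4 that hold coefficient by coefficient.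
-/

theorem IsLinearMap.codRestrict {R M M₂ : Type*} [Semiring R] [AddCommMonoid M]
    [AddCommMonoid M₂] [Module R M] [Module R M₂] {p : Submodule R M₂} {f : M → M₂}
    (hf : IsLinearMap R f) (h : ∀ x, f x ∈ p) : IsLinearMap R fun x => (⟨f x, h x⟩ : p) :=
  ((hf.mk' f).codRestrict p h).isLinear

section

variable {K : Type*} [Field K] {V : Type*} [AddCommGroup V] [Module K V]
  (br : V →ₗ[K] V →ₗ[K] V)

def IsLeftLeibniz : Prop := ∀ x y z : V, br x (br y z) = br (br x y) z + br y (br x z)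

noncomputable def leibSkew : V →ₗ[K] V →ₗ[K] V := (2 : K)⁻¹ • (br - br.flip)

@[simp]
theorem leibSkew_apply (a b : V) : leibSkew br a b = (2 : K)⁻¹ • (br a b - br b a) := rfl

theorem leibSkew_swap (a b : V) : leibSkew br b a = -leibSkew br a b := by
  simp only [leibSkew_apply]
  module

theorem leibMu3_expand (x y z : V) :
    leibMu3 K br x y z = (12 : K)⁻¹ •
      ((br (br x y) z + br z (br x y)) - (br (br y x) z + br z (br y x))
        - (br (br z y) x + br x (br z y)) - (br (br x z) y + br y (br x z))
        + (br (br y z) x + br x (br y z)) + (br (br z x) y + br y (br z x))) := by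
  have univ_perm_fin_three : (Finset.univ : Finset (Equiv.Perm (Fin 3))) =
      {1, Equiv.swap 0 1, Equiv.swap 0 2, Equiv.swap 1 2, finRotate 3, (finRotate 3)⁻¹} := by
    decide
  rw [leibMu3, univ_perm_fin_three]
  simp +decide only [Finset.mem_insert, Finset.mem_singleton, Finset.sum_insert,
    Finset.sum_singleton, Equiv.Perm.sign_one, Equiv.Perm.sign_swap', Equiv.Perm.sign_inv,
    sign_finRotate, ↓reduceIte, Equiv.Perm.coe_one, id_eq, Equiv.swap_apply_left,
    Equiv.swap_apply_right, Equiv.swap_apply_of_ne_of_ne, ne_eq, finRotate_apply,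
    Equiv.Perm.coe_inv, finRotate_symm_apply, Fin.reduceAdd, Fin.reduceSub, Matrix.cons_val]
  module

theorem leibMu3_swap₁₂ (x y z : V) : leibMu3 K br y x z = -leibMu3 K br x y z := by
  simp only [leibMu3_expand]
  module

theorem leibMu3_swap₂₃ (x y z : V) : leibMu3 K br x z y = -leibMu3 K br x y z := by
  simp only [leibMu3_expand]
  module

theorem isLinearMap_leibMu3₁ (y z : V) : IsLinearMap K fun x => leibMu3 K br x y z := by
  constructor <;> intros <;>
    simp only [leibMu3_expand, map_add, map_smul, LinearMap.add_apply, LinearMap.smul_apply] <;>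
    module

theorem isLinearMap_leibMu3₂ (x z : V) : IsLinearMap K fun y => leibMu3 K br x y z := by
  constructor <;> intros <;>
    simp only [leibMu3_expand, map_add, map_smul, LinearMap.add_apply, LinearMap.smul_apply] <;>
    module

theorem isLinearMap_leibMu3₃ (x y : V) : IsLinearMap K fun z => leibMu3 K br x y z := by
  constructor <;> intros <;>
    simp only [leibMu3_expand, map_add, map_smul, LinearMap.add_apply, LinearMap.smul_apply] <;>
    module

theorem br_br_eq_of_isLeftLeibniz (hbr : IsLeftLeibniz br) (x y z : V) :
    br (br x y) z = br x (br y z) - br y (br x z) :=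
  eq_sub_of_add_eq (hbr x y z).symm

variable [CharZero K]

theorem leibMu3_eq_of_isLeftLeibniz (hbr : IsLeftLeibniz br) (x y z : V) :
    leibMu3 K br x y z = (4 : K)⁻¹ • (br x (br y z) - br x (br z y) - br y (br x z)
      + br y (br z x) + br z (br x y) - br z (br y x)) := by
  simp only [leibMu3_expand, br_br_eq_of_isLeftLeibniz br hbr]
  module

theorem leibSkew_jacobiator (hbr : IsLeftLeibniz br) (x₁ x₂ x₃ : V) :
    leibSkew br x₁ (leibSkew br x₂ x₃) + leibSkew br x₂ (leibSkew br x₃ x₁)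
      + leibSkew br x₃ (leibSkew br x₁ x₂) = -leibMu3 K br x₁ x₂ x₃ := by
  simp only [leibMu3_eq_of_isLeftLeibniz br hbr, leibSkew_apply, map_sub, map_smul,
    br_br_eq_of_isLeftLeibniz br hbr]
  module

theorem leibSkew_jacobiator' (hbr : IsLeftLeibniz br) (x₁ x₂ y : V) :
    leibSkew br x₁ (leibSkew br x₂ y) - leibSkew br x₂ (leibSkew br x₁ y)
      - leibSkew br (leibSkew br x₁ x₂) y = -leibMu3 K br x₁ x₂ y := by
  rw [← leibSkew_jacobiator br hbr, leibSkew_swap br x₁ y, leibSkew_swap br _ y]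
  simp only [map_neg]
  abel

theorem leibMu3_cocycle (hbr : IsLeftLeibniz br) (x₁ x₂ x₃ x₄ : V) :
    leibMu3 K br (leibSkew br x₁ x₂) x₃ x₄ - leibMu3 K br (leibSkew br x₁ x₃) x₂ x₄
      + leibMu3 K br (leibSkew br x₁ x₄) x₂ x₃ + leibMu3 K br (leibSkew br x₂ x₃) x₁ x₄
      - leibMu3 K br (leibSkew br x₂ x₄) x₁ x₃ + leibMu3 K br (leibSkew br x₃ x₄) x₁ x₂
    = -leibSkew br x₄ (leibMu3 K br x₁ x₂ x₃) + leibSkew br x₃ (leibMu3 K br x₁ x₂ x₄)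
      - leibSkew br x₂ (leibMu3 K br x₁ x₃ x₄) + leibSkew br x₁ (leibMu3 K br x₂ x₃ x₄) := by
  simp only [leibMu3_eq_of_isLeftLeibniz br hbr, leibSkew_apply, map_sub, map_add, map_smul,
    LinearMap.sub_apply, LinearMap.smul_apply, br_br_eq_of_isLeftLeibniz br hbr]
  module

end

/-- Any (left) Leibniz algebra `𝔤` induces a 2-term L∞-algebra on
`𝔤^ann ↪ 𝔤` with `μ₂(a,b) = ½([a,b] − [b,a])` and
`μ₃(x₁,x₂,x₃) = (1/12) Σ_{σ∈S₃} sgn(σ)·([[x_{σ(1)},x_{σ(2)}],x_{σ(3)}]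
  + [x_{σ(3)},[x_{σ(1)},x_{σ(2)}]])`. -/
theorem leibniz_to_2term_LInfty
    (K : Type*) [Field K] [CharZero K] {V : Type*} [AddCommGroup V] [Module K V]
    (br : V →ₗ[K] V →ₗ[K] V)
    (hbr : ∀ x y z : V, br x (br y z) = br (br x y) z + br y (br x z)) :
    Is2TermLInfty K (Lm1 := ↥(leibAnn K br)) (L0 := V)
      (fun y => (y : V))
      (fun a b => (2 : K)⁻¹ • (br a b - br b a))
      (fun x y => ⟨(2 : K)⁻¹ • (br x (y : V) - br (y : V) x),
        Submodule.smul_mem _ _ (sub_mem (br_mem_leibAnn_left K br hbr x y.2)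
          (br_mem_leibAnn_right K br _ _))⟩)
      (fun x₁ x₂ x₃ => ⟨leibMu3 K br x₁ x₂ x₃, leibMu3_mem K br x₁ x₂ x₃⟩) :=
  { lin_m1 := (leibAnn K br).subtype.isLinear
    lin_m2_left y := ((leibSkew br).flip y).isLinear
    lin_m2_right x := (leibSkew br x).isLinear
    lin_m2r_left y := ((leibSkew br).flip y).isLinear.codRestrict _
    lin_m2r_right x := ((leibSkew br x).comp (leibAnn K br).subtype).isLinear.codRestrict _
    lin_m3_1 y z := (isLinearMap_leibMu3₁ br y z).codRestrict _
    lin_m3_2 x z := (isLinearMap_leibMu3₂ br x z).codRestrict _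
    lin_m3_3 x y := (isLinearMap_leibMu3₃ br x y).codRestrict _
    m2_antisym x₁ x₂ := leibSkew_swap br x₂ x₁
    m3_antisym12 x₁ x₂ x₃ := Subtype.ext (leibMu3_swap₁₂ br x₂ x₁ x₃)
    m3_antisym23 x₁ x₂ x₃ := Subtype.ext (leibMu3_swap₂₃ br x₁ x₃ x₂)
    L1 _ _ := rfl
    L2 y₁ y₂ := Subtype.ext (add_eq_zero_iff_eq_neg.mpr (leibSkew_swap br y₂ y₁))
    L3 := leibSkew_jacobiator br hbr
    L4 x₁ x₂ y := Subtype.ext (leibSkew_jacobiator' br hbr x₁ x₂ y)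
    L5 x₁ x₂ x₃ x₄ := Subtype.ext (leibMu3_cocycle br hbr x₁ x₂ x₃ x₄) }
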